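/- Let n ≥ 2 and let x = ⟨d,k,m⟩ be a nonzero element of M_n. Then the matrix transpose of x equals ⟨−d, k+d, m+d⟩, which is again a nonzero element of M_n; moreover x·xᵀ·x = x and xᵀ·x·xᵀ = xᵀ, and xᵀ is the unique element of M_n with this property: if y ∈ M_n satisfies x·y·x = x and y·x·y = y, then y = xᵀ. Hence M_n is an inverse monoid. -/
import Mathlib


open Matrix

/-- The n×n matrix ⟨d,k,m⟩: entry (i,j) (rows/columns numbered 1..n, here i.val+1, j.val+1)
equals 1 if k ≤ i ≤ m and j = i + d, and 0 otherwise. -/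
def tripMat (n : ℕ) (d k m : ℤ) : Matrix (Fin n) (Fin n) ℕ :=
  Matrix.of fun i j =>
    if k ≤ (i.val : ℤ) + 1 ∧ (i.val : ℤ) + 1 ≤ m ∧ (j.val : ℤ) + 1 = (i.val : ℤ) + 1 + d
    then 1 else 0

/-- The monoid M_n, as a set of n×n matrices: the zero matrix together with all
matrices ⟨d,k,m⟩ with 1 - min(0,d) ≤ k ≤ m ≤ n - max(0,d). -/
def MSet (n : ℕ) : Set (Matrix (Fin n) (Fin n) ℕ) :=
  {0} ∪ {x | ∃ d k m : ℤ,
    1 - min 0 d ≤ k ∧ k ≤ m ∧ m ≤ (n : ℤ) - max 0 d ∧ x = tripMat n d k m}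

lemma trip_transpose (n : ℕ) (d k m : ℤ) :
    (tripMat n d k m)ᵀ = tripMat n (-d) (k + d) (m + d) := by
  ext i j
  simp only [Matrix.transpose_apply, tripMat, Matrix.of_apply]
  split_ifs <;> omega

lemma trip_mul (n : ℕ) (d k m d' k' m' : ℤ) (hk' : 1 ≤ k') (hm' : m' ≤ (n : ℤ)) :
    tripMat n d k m * tripMat n d' k' m' =
      tripMat n (d + d') (max k (k' - d)) (min m (m' - d)) := by
  ext i j
  simp only [tripMat, Matrix.mul_apply, Matrix.of_apply]
  by_cases H : k' ≤ (i.val : ℤ) + 1 + d ∧ (i.val : ℤ) + 1 + d ≤ m'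
  · have hlt : ((i.val : ℤ) + d).toNat < n := by omega
    rw [Finset.sum_eq_single (⟨((i.val : ℤ) + d).toNat, hlt⟩ : Fin n)]
    · have hv : (((⟨((i.val : ℤ) + d).toNat, hlt⟩ : Fin n).val : ℤ)) = (i.val : ℤ) + d := by
        show ((((i.val : ℤ) + d).toNat : ℕ) : ℤ) = (i.val : ℤ) + d
        omega
      rw [hv]
      split_ifs <;> omega
    · intro b _ hb
      rw [if_neg, zero_mul]
      rintro ⟨-, -, hb3⟩
      refine hb (Fin.ext ?_)
      show b.val = ((i.val : ℤ) + d).toNat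
      omega
    · intro h; exact absurd (Finset.mem_univ _) h
  · rw [Finset.sum_eq_zero, if_neg]
    · omega
    · intro b _
      split_ifs with hA hB
      · exact absurd ⟨by omega, by omega⟩ H
      all_goals simp

/-- From an equality of triple matrices, where the right one is "valid" and nonempty,
extract the relations needed for the uniqueness argument. -/
lemma eq_extract (n : ℕ) (D K M d k m : ℤ) (hk : 1 ≤ k) (hkm : k ≤ m) (hm : m ≤ (n : ℤ))
    (hkd : 1 ≤ k + d) (hmd : m + d ≤ (n : ℤ))
    (h : tripMat n D K M = tripMat n d k m) : D = d ∧ K ≤ k ∧ m ≤ M := by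
  have hik : (k - 1).toNat < n := by omega
  have hjk : (k + d - 1).toNat < n := by omega
  have him : (m - 1).toNat < n := by omega
  have hjm : (m + d - 1).toNat < n := by omega
  have e1 := congrFun (congrFun h ⟨(k - 1).toNat, hik⟩) ⟨(k + d - 1).toNat, hjk⟩
  have e2 := congrFun (congrFun h ⟨(m - 1).toNat, him⟩) ⟨(m + d - 1).toNat, hjm⟩
  simp only [tripMat, Matrix.of_apply] at e1 e2
  have vik : (((⟨(k - 1).toNat, hik⟩ : Fin n).val : ℤ)) = k - 1 := by
    show (((k - 1).toNat : ℕ) : ℤ) = k - 1; omega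
  have vjk : (((⟨(k + d - 1).toNat, hjk⟩ : Fin n).val : ℤ)) = k + d - 1 := by
    show (((k + d - 1).toNat : ℕ) : ℤ) = k + d - 1; omega
  have vim : (((⟨(m - 1).toNat, him⟩ : Fin n).val : ℤ)) = m - 1 := by
    show (((m - 1).toNat : ℕ) : ℤ) = m - 1; omega
  have vjm : (((⟨(m + d - 1).toNat, hjm⟩ : Fin n).val : ℤ)) = m + d - 1 := by
    show (((m + d - 1).toNat : ℕ) : ℤ) = m + d - 1; omega
  rw [vik, vjk] at e1
  rw [vim, vjm] at e2
  split_ifs at e1 e2 <;> omega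

lemma trip_ne_zero (n : ℕ) (d k m : ℤ) (h1 : 1 - min 0 d ≤ k) (h2 : k ≤ m)
    (h3 : m ≤ (n : ℤ) - max 0 d) : tripMat n d k m ≠ 0 := by
  intro h
  have hik : (k - 1).toNat < n := by omega
  have hjk : (k + d - 1).toNat < n := by omega
  have e1 := congrFun (congrFun h ⟨(k - 1).toNat, hik⟩) ⟨(k + d - 1).toNat, hjk⟩
  simp only [tripMat, Matrix.of_apply, Matrix.zero_apply] at e1
  have vik : (((⟨(k - 1).toNat, hik⟩ : Fin n).val : ℤ)) = k - 1 := by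
    show (((k - 1).toNat : ℕ) : ℤ) = k - 1; omega
  have vjk : (((⟨(k + d - 1).toNat, hjk⟩ : Fin n).val : ℤ)) = k + d - 1 := by
    show (((k + d - 1).toNat : ℕ) : ℤ) = k + d - 1; omega
  rw [vik, vjk] at e1
  split_ifs at e1 <;> omega

lemma trip_inv_left (n : ℕ) (d k m : ℤ) (h1 : 1 - min 0 d ≤ k) (h2 : k ≤ m)
    (h3 : m ≤ (n : ℤ) - max 0 d) :
    tripMat n d k m * (tripMat n d k m)ᵀ * tripMat n d k m = tripMat n d k m := by
  rw [trip_transpose, trip_mul n d k m (-d) (k + d) (m + d) (by omega) (by omega),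
    show k + d - d = k from by ring, show m + d - d = m from by ring,
    show d + -d = 0 from by ring, max_self, min_self,
    trip_mul n 0 k m d k m (by omega) (by omega),
    zero_add, sub_zero, sub_zero, max_self, min_self]

lemma trip_inv_right (n : ℕ) (d k m : ℤ) (h1 : 1 - min 0 d ≤ k) (h2 : k ≤ m)
    (h3 : m ≤ (n : ℤ) - max 0 d) :
    (tripMat n d k m)ᵀ * tripMat n d k m * (tripMat n d k m)ᵀ = (tripMat n d k m)ᵀ := by
  rw [trip_transpose, trip_mul n (-d) (k + d) (m + d) d k m (by omega) (by omega),
    show k - -d = k + d from by ring, show m - -d = m + d from by ring,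
    show -d + d = 0 from by ring, max_self, min_self,
    trip_mul n 0 (k + d) (m + d) (-d) (k + d) (m + d) (by omega) (by omega),
    zero_add, sub_zero, sub_zero, max_self, min_self]

lemma trip_unique (n : ℕ) (d k m : ℤ) (h1 : 1 - min 0 d ≤ k) (h2 : k ≤ m)
    (h3 : m ≤ (n : ℤ) - max 0 d) :
    ∀ y ∈ MSet n, tripMat n d k m * y * tripMat n d k m = tripMat n d k m →
      y * tripMat n d k m * y = y → y = (tripMat n d k m)ᵀ := by
  intro y hy hxyx hyxy
  simp only [MSet, Set.mem_union, Set.mem_singleton_iff, Set.mem_setOf_eq] at hy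
  rcases hy with rfl | ⟨d', k', m', g1, g2, g3, rfl⟩
  · rw [mul_zero, zero_mul] at hxyx
    exact absurd hxyx.symm (trip_ne_zero n d k m h1 h2 h3)
  · rw [trip_mul n d k m d' k' m' (by omega) (by omega),
      trip_mul n (d + d') (max k (k' - d)) (min m (m' - d)) d k m (by omega) (by omega)] at hxyx
    obtain ⟨E1, E2, E3⟩ := eq_extract n (d + d' + d) _ _ d k m (by omega) h2 (by omega)
      (by omega) (by omega) hxyx
    rw [trip_mul n d' k' m' d k m (by omega) (by omega),
      trip_mul n (d' + d) (max k' (k - d')) (min m' (m - d')) d' k' m'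
        (by omega) (by omega)] at hyxy
    obtain ⟨F1, F2, F3⟩ := eq_extract n (d' + d + d') _ _ d' k' m' (by omega) g2 (by omega)
      (by omega) (by omega) hyxy
    rw [trip_transpose, show d' = -d from by omega, show k' = k + d from by omega,
      show m' = m + d from by omega]

/-- the transpose of x = ⟨d,k,m⟩ is ⟨−d,k+d,m+d⟩ ∈ M_n, is an inverse of x,
and is the unique inverse of x in M_n; moreover every element of M_n has a unique inverse
(M_n is an inverse monoid). -/
theorem stmt_11 (n : ℕ) (hn : 2 ≤ n) (d k m : ℤ)
    (h1 : 1 - min 0 d ≤ k) (h2 : k ≤ m) (h3 : m ≤ (n : ℤ) - max 0 d) :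
    (tripMat n d k m)ᵀ = tripMat n (-d) (k + d) (m + d) ∧
    (1 - min 0 (-d) ≤ k + d ∧ k + d ≤ m + d ∧ m + d ≤ (n : ℤ) - max 0 (-d)) ∧
    tripMat n d k m * (tripMat n d k m)ᵀ * tripMat n d k m = tripMat n d k m ∧
    (tripMat n d k m)ᵀ * tripMat n d k m * (tripMat n d k m)ᵀ = (tripMat n d k m)ᵀ ∧
    (∀ y ∈ MSet n, tripMat n d k m * y * tripMat n d k m = tripMat n d k m →
      y * tripMat n d k m * y = y → y = (tripMat n d k m)ᵀ) ∧
    (∀ x ∈ MSet n, ∃! y, y ∈ MSet n ∧ x * y * x = x ∧ y * x * y = y) := by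
  refine ⟨trip_transpose n d k m, ⟨by omega, by omega, by omega⟩,
    trip_inv_left n d k m h1 h2 h3, trip_inv_right n d k m h1 h2 h3,
    trip_unique n d k m h1 h2 h3, ?_⟩
  intro x hx
  simp only [MSet, Set.mem_union, Set.mem_singleton_iff, Set.mem_setOf_eq] at hx
  rcases hx with rfl | ⟨d0, k0, m0, g1, g2, g3, rfl⟩
  · refine ⟨0, ⟨Or.inl rfl, by simp, by simp⟩, ?_⟩
    rintro y ⟨-, -, hy⟩
    rw [mul_zero, zero_mul] at hy
    exact hy.symm
  · refine ⟨(tripMat n d0 k0 m0)ᵀ, ⟨?_, trip_inv_left n d0 k0 m0 g1 g2 g3,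
      trip_inv_right n d0 k0 m0 g1 g2 g3⟩, ?_⟩
    · rw [trip_transpose]
      exact Or.inr ⟨-d0, k0 + d0, m0 + d0, by omega, by omega, by omega, rfl⟩
    · rintro y ⟨hy, hxyx, hyxy⟩
      exact trip_unique n d0 k0 m0 g1 g2 g3 y hy hxyx hyxy
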